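/- Let F : A × X → X be an f-action, a ∈ [W,A], h ∈ [W,X], and (U,n) a co-H-space. Then the induced map (a·h)_* : [U,W] → [U,X] satisfies (a·h)_*(γ) = f_* a_* (γ) ⊕_n h_*(γ) for all γ ∈ [U,W]. -/

import Mathlib

open ContinuousMap

/-- The wedge `X ∨ B`, modeled as the subspace `(X × {b₀}) ∪ ({x₀} × B)` of `X × B`. -/
def Wedge (X B : Type*) [TopologicalSpace X] [TopologicalSpace B] (x₀ : X) (b₀ : B) :=
  {z : X × B // z.1 = x₀ ∨ z.2 = b₀}

variable {X B : Type*} [TopologicalSpace X] [TopologicalSpace B] {x₀ : X} {b₀ : B}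

instance : TopologicalSpace (Wedge X B x₀ b₀) :=
  inferInstanceAs (TopologicalSpace {z : X × B // z.1 = x₀ ∨ z.2 = b₀})

namespace Wedge

/-- The basepoint of the wedge. -/
def pt : Wedge X B x₀ b₀ := ⟨(x₀, b₀), Or.inl rfl⟩

/-- Inclusion of the first wedge summand. -/
def inl : C(X, Wedge X B x₀ b₀) :=
  ⟨fun x => ⟨(x, b₀), Or.inr rfl⟩, by fun_prop⟩

/-- Inclusion of the second wedge summand. -/
def inr : C(B, Wedge X B x₀ b₀) :=
  ⟨fun b => ⟨(x₀, b), Or.inl rfl⟩, by fun_prop⟩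

/-- Projection of the wedge onto the first summand (collapse `B`). -/
def p₁ : C(Wedge X B x₀ b₀, X) := ⟨fun z => z.1.1, by fun_prop⟩

/-- Projection of the wedge onto the second summand (collapse `X`). -/
def p₂ : C(Wedge X B x₀ b₀, B) := ⟨fun z => z.1.2, by fun_prop⟩

/-- Inclusion of the wedge into the product. -/
def J : C(Wedge X B x₀ b₀, X × B) := ⟨Subtype.val, continuous_subtype_val⟩

end Wedge

def incl₁ {A X : Type*} [TopologicalSpace A] [TopologicalSpace X] (x₀ : X) : C(A, A × X) :=
  (ContinuousMap.id A).prodMk (ContinuousMap.const A x₀)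

def incl₂ {A X : Type*} [TopologicalSpace A] [TopologicalSpace X] (a₀ : A) : C(X, A × X) :=
  (ContinuousMap.const X a₀).prodMk (ContinuousMap.id X)

def IsAction {A X : Type*} [TopologicalSpace A] [TopologicalSpace X] (a₀ : A) (x₀ : X)
    (F : C(A × X, X)) (f : C(A, X)) : Prop :=
  (F.comp (incl₂ a₀)).HomotopicRel (ContinuousMap.id X) {x₀} ∧
  (F.comp (incl₁ x₀)).HomotopicRel f {a₀}

def IsComul {U : Type*} [TopologicalSpace U] (u₀ : U) (n : C(U, Wedge U U u₀ u₀)) : Prop :=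
  (Wedge.p₁.comp n).HomotopicRel (ContinuousMap.id U) {u₀} ∧
  (Wedge.p₂.comp n).HomotopicRel (ContinuousMap.id U) {u₀}

open Classical in
/-- The fold map on a wedge `Y ∨ Y → Y`. It is always continuous. -/
noncomputable def wfold {Y : Type*} [TopologicalSpace Y] (y₀ : Y) : C(Wedge Y Y y₀ y₀, Y) where
  toFun z := if z.val.1 = y₀ then z.val.2 else z.val.1
  continuous_toFun := by
    rw [continuous_def]
    intro V hV
    by_cases hy : y₀ ∈ V
    · have : (fun (z : Wedge Y Y y₀ y₀) => if z.val.1 = y₀ then z.val.2 else z.val.1) ⁻¹' V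
          = Subtype.val ⁻¹' (V ×ˢ V) := by
        ext z
        obtain ⟨⟨z₁, z₂⟩, hz⟩ := z
        show (if z₁ = y₀ then z₂ else z₁) ∈ V ↔ z₁ ∈ V ∧ z₂ ∈ V
        by_cases h1 : z₁ = y₀
        · simp [h1, hy]
        · have h2 : z₂ = y₀ := hz.resolve_left h1
          simp [h1, h2, hy]
      rw [this]
      exact (hV.prod hV).preimage continuous_subtype_val
    · have : (fun (z : Wedge Y Y y₀ y₀) => if z.val.1 = y₀ then z.val.2 else z.val.1) ⁻¹' V
          = Subtype.val ⁻¹' (V ×ˢ (Set.univ : Set Y) ∪ (Set.univ : Set Y) ×ˢ V) := by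
        ext z
        obtain ⟨⟨z₁, z₂⟩, hz⟩ := z
        show (if z₁ = y₀ then z₂ else z₁) ∈ V ↔
          (z₁ ∈ V ∧ z₂ ∈ (Set.univ : Set Y)) ∨ (z₁ ∈ (Set.univ : Set Y) ∧ z₂ ∈ V)
        simp only [Set.mem_univ, and_true, true_and]
        by_cases h1 : z₁ = y₀
        · simp only [h1, if_pos rfl]
          constructor
          · intro hv; exact Or.inr hv
          · rintro (hv | hv)
            · exact (hy hv).elim
            · exact hv
        · have h2 : z₂ = y₀ := hz.resolve_left h1
          simp only [h1, if_neg h1]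
          constructor
          · intro hv; exact Or.inl hv
          · rintro (hv | hv)
            · exact hv
            · rw [h2] at hv; exact absurd hv hy
      rw [this]
      exact (((hV.prod isOpen_univ).union (isOpen_univ.prod hV))).preimage continuous_subtype_val

/-- Let `F` be an `f`-action, `a : W → A`, `h : W → X` based maps, and `(U,n)` a
co-H-space.  Then for every `γ : U → W` we have
`(a·h)_*(γ) = f_* a_*(γ) ⊕ₙ h_*(γ)` in `[U,X]`, i.e.
`(F ∘ (a,h)) ∘ γ ≃ (f∘a∘γ | h∘γ) ∘ n` based-homotopically, where
`q = (f∘a∘γ | h∘γ)` is any map on the wedge with the indicated restrictions. -/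
theorem action_operation_induced {A X W U : Type*} [TopologicalSpace A] [TopologicalSpace X]
    [TopologicalSpace W] [TopologicalSpace U] (a₀ : A) (x₀ : X) (w₀ : W) (u₀ : U)
    (F : C(A × X, X)) (f : C(A, X)) (hF : IsAction a₀ x₀ F f)
    (n : C(U, Wedge U U u₀ u₀)) (hn : IsComul u₀ n)
    (a : C(W, A)) (ha : a w₀ = a₀) (h : C(W, X)) (hh : h w₀ = x₀)
    (γ : C(U, W)) (hγ : γ u₀ = w₀)
    (q : C(Wedge U U u₀ u₀, X))
    (hq₁ : q.comp Wedge.inl = (f.comp a).comp γ) (hq₂ : q.comp Wedge.inr = h.comp γ) :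
    ((F.comp (a.prodMk h)).comp γ).HomotopicRel (q.comp n) {u₀} := by
  classical
  obtain ⟨Hi⟩ := hF.1
  obtain ⟨Hf⟩ := hF.2
  obtain ⟨P₁⟩ := hn.1
  obtain ⟨P₂⟩ := hn.2
  -- basic point facts
  have hFx : F (a₀, x₀) = x₀ := by
    have := Hi.fst_eq_snd (Set.mem_singleton x₀)
    simp only [comp_apply, incl₂, prod_eval, coe_const, Function.const_apply, coe_id,
      id_eq] at this
    exact this
  have hfa : f a₀ = x₀ := by
    have := Hf.fst_eq_snd (Set.mem_singleton a₀)
    simp only [comp_apply, incl₁, prod_eval, coe_id, id_eq, coe_const,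
      Function.const_apply] at this
    rw [← this, hFx]
  have Hi_t : ∀ t, Hi (t, x₀) = x₀ := fun t => by
    have := Hi.eq_snd t (Set.mem_singleton x₀)
    simp only [coe_id, id_eq] at this
    exact this
  have Hf_t : ∀ t, Hf (t, a₀) = x₀ := fun t => by
    rw [Hf.eq_snd t (Set.mem_singleton a₀)]; exact hfa
  have P₁_t : ∀ t, P₁ (t, u₀) = u₀ := fun t => by
    simpa using P₁.eq_snd t (Set.mem_singleton u₀)
  have P₂_t : ∀ t, P₂ (t, u₀) = u₀ := fun t => by
    simpa using P₂.eq_snd t (Set.mem_singleton u₀)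
  have hn1 : (n u₀).val.1 = u₀ := by
    have := P₁.fst_eq_snd (Set.mem_singleton u₀)
    simpa [Wedge.p₁] using this
  have hn2 : (n u₀).val.2 = u₀ := by
    have := P₂.fst_eq_snd (Set.mem_singleton u₀)
    simpa [Wedge.p₂] using this
  -- endpoint computations for the action homotopies
  have Hf0 : ∀ x : A, Hf (0, x) = F (x, x₀) := fun x => by
    have := Hf.apply_zero x
    simp only [comp_apply, incl₁, prod_eval, coe_id, id_eq, coe_const,
      Function.const_apply] at this
    exact this
  have Hf1 : ∀ x : A, Hf (1, x) = f x := fun x => Hf.apply_one x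
  have Hi0 : ∀ y : X, Hi (0, y) = F (a₀, y) := fun y => by
    have := Hi.apply_zero y
    simp only [comp_apply, incl₂, prod_eval, coe_id, id_eq, coe_const,
      Function.const_apply] at this
    exact this
  have Hi1 : ∀ y : X, Hi (1, y) = y := fun y => Hi.apply_one y
  -- the "pointwise product" map on the wedge
  have Gcont : Continuous fun z : Wedge U U u₀ u₀ => F (a (γ z.val.1), h (γ z.val.2)) := by
    fun_prop
  set G : C(Wedge U U u₀ u₀, X) := ⟨fun z => F (a (γ z.val.1), h (γ z.val.2)), Gcont⟩ with hG
  -- membership of the combined homotopy pair in the wedge of X with itself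
  have memb : ∀ (t : unitInterval) (z : Wedge U U u₀ u₀),
      Hf (t, a (γ z.val.1)) = x₀ ∨ Hi (t, h (γ z.val.2)) = x₀ := by
    intro t z
    rcases z.property with h1 | h2
    · left; rw [h1, hγ, ha]; exact Hf_t t
    · right; rw [h2, hγ, hh]; exact Hi_t t
  have Kcont : Continuous fun p : unitInterval × Wedge U U u₀ u₀ =>
      (⟨(Hf (p.1, a (γ p.2.val.1)), Hi (p.1, h (γ p.2.val.2))), memb p.1 p.2⟩ :
        Wedge X X x₀ x₀) := by
    apply Continuous.subtype_mk
    apply Continuous.prodMk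
    · exact Hf.continuous.comp (by fun_prop)
    · exact Hi.continuous.comp (by fun_prop)
  set K : C(unitInterval × Wedge U U u₀ u₀, Wedge X X x₀ x₀) :=
    ⟨_, Kcont⟩ with hK
  have Kval : ∀ p, (K p).val = (Hf (p.1, a (γ p.2.val.1)), Hi (p.1, h (γ p.2.val.2))) :=
    fun p => rfl
  -- Step 2 : `G ∘ n` is homotopic rel `u₀` to `q ∘ n`
  have H2 : (G.comp n).HomotopicRel (q.comp n) {u₀} := by
    refine ⟨⟨⟨⟨fun p => wfold x₀ (K (p.1, n p.2)),
      (wfold x₀).continuous.comp (K.continuous.comp (continuous_fst.prodMk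
        (n.continuous.comp continuous_snd)))⟩, ?_, ?_⟩, ?_⟩⟩
    · -- map_zero_left
      intro u
      show wfold x₀ (K (0, n u)) = G (n u)
      simp only [Kval, hG, wfold, ContinuousMap.coe_mk]
      rcases (n u).property with h1 | h2
      · rw [if_pos (by rw [Hf0, h1, hγ, ha]; exact hFx)]
        rw [Hi0, h1, hγ, ha]
      · have e : h (γ (n u).val.2) = x₀ := by rw [h2, hγ, hh]
        split_ifs with hc
        · rw [e, Hi_t 0]
          rw [Hf0] at hc
          exact hc.symm
        · rw [e, Hf0]
    · -- map_one_left
      intro u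
      show wfold x₀ (K (1, n u)) = q (n u)
      simp only [Kval, hG, wfold, ContinuousMap.coe_mk]
      have hinr : ∀ v : U, q (Wedge.inr v) = h (γ v) := fun v =>
        congrFun (congrArg DFunLike.coe hq₂) v
      have hinl : ∀ v : U, q (Wedge.inl v) = f (a (γ v)) := fun v =>
        congrFun (congrArg DFunLike.coe hq₁) v
      rcases (n u).property with h1 | h2
      · rw [if_pos (by rw [Hf1, h1, hγ, ha]; exact hfa)]
        have hnu : n u = Wedge.inr (n u).val.2 := by
          apply Subtype.ext
          exact Prod.ext h1 rfl
        rw [Hi1, hnu, hinr]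
        rfl
      · have hnu : n u = Wedge.inl (n u).val.1 := by
          apply Subtype.ext
          exact Prod.ext rfl h2
        have e2 : h (γ (n u).val.2) = x₀ := by rw [h2, hγ, hh]
        split_ifs with hc
        · rw [Hi1, e2, hnu, hinl]
          rw [Hf1] at hc
          exact hc.symm
        · rw [Hf1, hnu, hinl]
          rfl
    · -- rel property
      intro t u hu
      have hu' : u = u₀ := hu
      show wfold x₀ (K (t, n u)) = G (n u)
      rw [hu']
      simp only [Kval, hG, wfold, ContinuousMap.coe_mk]
      rw [hn1, hn2, hγ, ha, hh]
      rw [if_pos (Hf_t t), Hi_t t, hFx]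
  -- Step 1 : the left-hand side is homotopic rel `u₀` to `G ∘ n`
  have H1 : (G.comp n).HomotopicRel ((F.comp (a.prodMk h)).comp γ) {u₀} := by
    refine ⟨⟨⟨⟨fun p => F (a (γ (P₁ p)), h (γ (P₂ p))), by
      exact F.continuous.comp ((a.continuous.comp (γ.continuous.comp P₁.continuous)).prodMk
        (h.continuous.comp (γ.continuous.comp P₂.continuous)))⟩, ?_, ?_⟩, ?_⟩⟩
    · intro u
      show F (a (γ (P₁ (0, u))), h (γ (P₂ (0, u)))) = G (n u)
      rw [P₁.apply_zero, P₂.apply_zero]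
      simp [hG, Wedge.p₁, Wedge.p₂]
    · intro u
      show F (a (γ (P₁ (1, u))), h (γ (P₂ (1, u)))) =
        ((F.comp (a.prodMk h)).comp γ) u
      rw [P₁.apply_one, P₂.apply_one]
      simp
    · intro t u hu
      have hu' : u = u₀ := hu
      show F (a (γ (P₁ (t, u))), h (γ (P₂ (t, u)))) = G (n u)
      rw [hu', P₁_t, P₂_t]
      simp [hG, hn1, hn2]
  exact (HomotopicRel.symm H1).trans H2
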